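/- arXiv:1311.4862 — 2 statements merged into one kernel-verified Lean document; each statement's English description precedes it below -/
import Mathlib

section
/- Let b(x) = (sin(πx)/π)² · ( ∑_{k=1}^∞ 1/(x−k)² − ∑_{n=0}^∞ 1/(x+n)² + 2/x ) for nonintegral x (extended by continuity). Then b(x) = −B(−x) for all real x, and b(x) ≤ sgn(x) for every real x, with strict inequality whenever x is not an integer. -/
/-!
Parseval's identity for `t ↦ exp (2πixt)` on `[0, 1]` gives `∑_{n ∈ ℤ} (x - n)⁻² = (π / sin πx)²`.
So for nonintegral `x`, with `s = (sin πx / π)²`, `S₁ = ∑_{k ≥ 0} (x - k)⁻²` and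
`S₂ = ∑_{n ≥ 0} (x + n + 1)⁻²`, we have `s (S₁ + S₂) = 1`, hence
`B x = 1 + 2s (1/x - S₂) = -1 + 2s (S₁ + 1/x)`.
Comparing termwise with the telescoping series `1/y = ∑ (1/(y + n) - 1/(y + n + 1))`
gives `S₂ < 1/x` for `x > 0` and `S₁ > -1/x` for `x < 0`, i.e. `sgn < B` off the integers.
Reflection `b x = -B (-x)` turns this into `b < sgn`, and since `sgn` is monotone, continuity of `b`
extends `b ≤ sgn` to the integers.
-/

open Real Filter Topology Complex MeasureTheory

theorem Real.sign_monotone : Monotone Real.sign := by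
  intro a b hab
  simp only [Real.sign]
  split_ifs <;> linarith

theorem Real.sin_pi_mul_ne_zero {x : ℝ} (hx : ∀ n : ℤ, x ≠ n) : Real.sin (π * x) ≠ 0 :=
  Real.sin_ne_zero_iff.2 fun n hn ↦ hx n (mul_right_cancel₀ Real.pi_ne_zero (by linarith)).symm

theorem hasSum_sub_succ_of_antitone {f : ℕ → ℝ} {l : ℝ} (hf : Antitone f)
    (hl : Tendsto f atTop (𝓝 l)) : HasSum (fun n ↦ f n - f (n + 1)) (f 0 - l) := by
  refine (hasSum_iff_tendsto_nat_of_nonneg (fun n ↦ sub_nonneg.2 (hf n.le_succ)) _).2 ?_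
  simp only [Finset.sum_range_sub']
  exact tendsto_const_nhds.sub hl

theorem hasSum_one_div_add_sub_one_div_add_succ {y : ℝ} (hy : 0 < y) :
    HasSum (fun n : ℕ ↦ 1 / (y + n) - 1 / (y + n + 1)) (1 / y) := by
  have hanti : Antitone fun n : ℕ ↦ 1 / (y + n) := fun m n hmn ↦
    one_div_le_one_div_of_le (by positivity) (by gcongr)
  have hlim : Tendsto (fun n : ℕ ↦ 1 / (y + n)) atTop (𝓝 0) :=
    tendsto_const_nhds.div_atTop (tendsto_atTop_add_const_left _ y tendsto_natCast_atTop_atTop)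
  simpa [add_assoc] using hasSum_sub_succ_of_antitone hanti hlim

theorem summable_one_div_add_sq (a : ℝ) : Summable fun n : ℕ ↦ 1 / (a + n) ^ 2 := by
  refine ((Real.summable_one_div_nat_add_rpow a 2).2 one_lt_two).congr fun n ↦ ?_
  rw [Real.rpow_two, sq_abs, add_comm]

theorem one_div_add_one_sq_lt_one_div_sub_one_div_add_one {z : ℝ} (hz : 0 < z) :
    1 / (z + 1) ^ 2 < 1 / z - 1 / (z + 1) := by
  rw [div_sub_div _ _ hz.ne' (by positivity), div_lt_div_iff₀ (by positivity) (by positivity)]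
  nlinarith

theorem one_div_sub_one_div_add_one_lt_one_div_sq {z : ℝ} (hz : 0 < z) :
    1 / z - 1 / (z + 1) < 1 / z ^ 2 := by
  rw [div_sub_div _ _ hz.ne' (by positivity), div_lt_div_iff₀ (by positivity) (by positivity)]
  nlinarith

theorem one_div_lt_tsum_one_div_add_sq {y : ℝ} (hy : 0 < y) :
    1 / y < ∑' n : ℕ, 1 / (y + n) ^ 2 :=
  hasSum_lt (i := 0) (fun n ↦ (one_div_sub_one_div_add_one_lt_one_div_sq (by positivity)).le)
    (one_div_sub_one_div_add_one_lt_one_div_sq (by simpa))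
    (hasSum_one_div_add_sub_one_div_add_succ hy)
    (summable_one_div_add_sq y).hasSum

theorem tsum_one_div_add_add_one_sq_lt {y : ℝ} (hy : 0 < y) :
    ∑' n : ℕ, 1 / (y + n + 1) ^ 2 < 1 / y :=
  hasSum_lt (i := 0)
    (fun n ↦ (one_div_add_one_sq_lt_one_div_sub_one_div_add_one (by positivity)).le)
    (one_div_add_one_sq_lt_one_div_sub_one_div_add_one (by simpa))
    (Summable.hasSum (f := fun n : ℕ ↦ 1 / (y + n + 1) ^ 2)
      ((summable_one_div_add_sq (y + 1)).congr fun n ↦ by ring_nf))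
    (hasSum_one_div_add_sub_one_div_add_succ hy)

theorem fourierCoeffOn_cexp_mul {x : ℝ} {n : ℤ} (hxn : x ≠ n) :
    fourierCoeffOn zero_lt_one (fun t : ℝ ↦ cexp (2 * π * I * x * t)) n =
      (cexp (2 * π * I * x) - 1) / (2 * π * I * (x - n)) := by
  have hc : 2 * π * I * (x - n) ≠ 0 := by
    simpa [Real.pi_ne_zero, I_ne_zero, sub_eq_zero] using mod_cast hxn
  have hint : ∀ t : ℝ, fourier (-n) (t : AddCircle (1 - 0 : ℝ)) • cexp (2 * π * I * x * t) =
      cexp (2 * π * I * (x - n) * t) := by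
    intro t
    rw [fourier_coe_apply, smul_eq_mul, ← Complex.exp_add]
    congr 1
    push_cast
    ring
  rw [fourierCoeffOn_eq_integral, intervalIntegral.integral_congr fun t _ ↦ hint t,
    integral_exp_mul_complex hc]
  have hper : cexp (2 * π * I * (x - n)) = cexp (2 * π * I * x) := by
    rw [show 2 * π * I * (x - n) = 2 * π * I * x + (-n : ℤ) * (2 * π * I) by push_cast; ring,
      Complex.exp_add, Complex.exp_int_mul_two_pi_mul_I, mul_one]
  simp [hper]

theorem norm_cexp_sub_one_div_sq (x : ℝ) (n : ℤ) :
    ‖(cexp (2 * π * I * x) - 1) / (2 * π * I * (x - n))‖ ^ 2 =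
      (Real.sin (π * x) / π) ^ 2 * (1 / (x - n) ^ 2) := by
  have hnum : ‖cexp (2 * π * I * x) - 1‖ = ‖2 * Real.sin (π * x)‖ := by
    rw [show 2 * π * I * x = I * ((2 * π * x : ℝ) : ℂ) by push_cast; ring,
      Complex.norm_exp_I_mul_ofReal_sub_one]
    ring_nf
  have hden : ‖2 * π * I * (x - n)‖ = ‖2 * π * (x - n)‖ := by
    rw [show 2 * π * I * (x - n) = ((2 * π * (x - n) : ℝ) : ℂ) * I by push_cast; ring,
      norm_mul, Complex.norm_I, mul_one, Complex.norm_real]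
  rw [norm_div, hnum, hden, Real.norm_eq_abs, Real.norm_eq_abs, div_pow, sq_abs, sq_abs]
  field_simp

theorem hasSum_one_div_sub_int_sq {x : ℝ} (hx : ∀ n : ℤ, x ≠ n) :
    HasSum (fun n : ℤ ↦ 1 / (x - n) ^ 2) ((π / Real.sin (π * x)) ^ 2) := by
  set f : ℝ → ℂ := fun t ↦ cexp (2 * π * I * x * t)
  have hf : ∀ t, ‖f t‖ = 1 := fun t ↦ by simp [f, Complex.norm_exp]
  have hL2 : MemLp f 2 (volume.restrict (Set.Ioc 0 1)) :=
    .of_bound (by fun_prop : Continuous f).aestronglyMeasurable 1 (.of_forall fun t ↦ (hf t).le)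
  have hcoeff (n : ℤ) : ‖fourierCoeffOn zero_lt_one f n‖ ^ 2 =
      (Real.sin (π * x) / π) ^ 2 * (1 / (x - n) ^ 2) := by
    rw [fourierCoeffOn_cexp_mul (hx n), norm_cexp_sub_one_div_sq]
  have hparseval := hasSum_sq_fourierCoeffOn zero_lt_one hL2
  simp only [hcoeff, hf] at hparseval
  have hsin := Real.sin_pi_mul_ne_zero hx
  have hmass : (1 - 0 : ℝ)⁻¹ • ∫ _ in (0 : ℝ)..1, (1 : ℝ) ^ 2 =
      (Real.sin (π * x) / π) ^ 2 * (π / Real.sin (π * x)) ^ 2 := by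
    field_simp
    norm_num
  rw [hmass] at hparseval
  exact (hasSum_mul_left_iff (by positivity)).1 hparseval

theorem tsum_one_div_sub_sq_add_tsum_one_div_add_add_one_sq {x : ℝ} (hx : ∀ n : ℤ, x ≠ n) :
    (∑' k : ℕ, 1 / (x - k) ^ 2) + (∑' n : ℕ, 1 / (x + n + 1) ^ 2) =
      (π / Real.sin (π * x)) ^ 2 := by
  have hpos : Summable fun k : ℕ ↦ 1 / (x - k) ^ 2 :=
    (summable_one_div_add_sq (-x)).congr fun k ↦ by rw [← neg_sq, neg_add_eq_sub, neg_sub]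
  have hneg : Summable fun n : ℕ ↦ 1 / (x + n + 1) ^ 2 :=
    (summable_one_div_add_sq (x + 1)).congr fun n ↦ by ring_nf
  refine (HasSum.of_nat_of_neg_add_one (f := fun n : ℤ ↦ 1 / (x - n) ^ 2) ?_ ?_).unique
    (hasSum_one_div_sub_int_sq hx)
  · simpa using hpos.hasSum
  · convert hneg.hasSum using 3 with n
    push_cast
    ring

theorem Continuous.le_of_monotone_of_dense {α β : Type*} [TopologicalSpace α] [LinearOrder α]
    [OrderTopology α] [DenselyOrdered α] [NoMinOrder α] [TopologicalSpace β] [Preorder β]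
    [ClosedIicTopology β] {g h : α → β} (hg : Continuous g) (hh : Monotone h) {s : Set α}
    (hs : Dense s) (hle : ∀ y ∈ s, g y ≤ h y) (x : α) : g x ≤ h x := by
  have hsub : Set.Iio x ∩ s ⊆ g ⁻¹' Set.Iic (h x) := fun y hy ↦ (hle y hy.2).trans (hh hy.1.le)
  have hx : x ∈ closure (Set.Iio x ∩ s) := by
    refine closure_minimal (hs.open_subset_closure_inter isOpen_Iio) isClosed_closure ?_
    rw [closure_Iio]
    exact Set.self_mem_Iic
  exact (isClosed_Iic.preimage hg).closure_subset_iff.2 hsub hx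

noncomputable def beurlingMajorant (x : ℝ) : ℝ :=
  (Real.sin (π * x) / π) ^ 2 *
    ((∑' k : ℕ, 1 / (x - k) ^ 2) - (∑' n : ℕ, 1 / (x + n + 1) ^ 2) + 2 / x)

noncomputable def beurlingMinorant (x : ℝ) : ℝ :=
  (Real.sin (π * x) / π) ^ 2 *
    ((∑' k : ℕ, 1 / (x - k - 1) ^ 2) - (∑' n : ℕ, 1 / (x + n) ^ 2) + 2 / x)

theorem beurlingMinorant_eq_neg_beurlingMajorant_neg (x : ℝ) :
    beurlingMinorant x = -beurlingMajorant (-x) := by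
  have hfirst : ∑' k : ℕ, 1 / (-x - k) ^ 2 = ∑' n : ℕ, 1 / (x + n) ^ 2 :=
    tsum_congr fun k ↦ by rw [← neg_sq, neg_sub, sub_neg_eq_add, add_comm]
  have hsecond : ∑' n : ℕ, 1 / (-x + n + 1) ^ 2 = ∑' k : ℕ, 1 / (x - k - 1) ^ 2 :=
    tsum_congr fun n ↦ by ring_nf
  rw [beurlingMajorant, beurlingMinorant, hfirst, hsecond, mul_neg, Real.sin_neg, neg_div, neg_sq]
  ring

theorem sign_lt_beurlingMajorant {x : ℝ} (hx : ∀ n : ℤ, x ≠ n) :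
    Real.sign x < beurlingMajorant x := by
  set s := (Real.sin (π * x) / π) ^ 2
  set S₁ := ∑' k : ℕ, 1 / (x - k) ^ 2
  set S₂ := ∑' n : ℕ, 1 / (x + n + 1) ^ 2
  have hsin := Real.sin_pi_mul_ne_zero hx
  have hs : 0 < s := by positivity
  have hparseval : s * (S₁ + S₂) = 1 := by
    rw [tsum_one_div_sub_sq_add_tsum_one_div_add_add_one_sq hx]
    simp only [s]
    field_simp
  rcases (show x ≠ 0 by exact_mod_cast hx 0).lt_or_gt with hneg | hpos
  · have hS₁ : 1 / -x < S₁ :=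
      (one_div_lt_tsum_one_div_add_sq (neg_pos.2 hneg)).trans_eq (tsum_congr fun k ↦ by ring)
    have hmaj : beurlingMajorant x = -(s * (S₁ + S₂)) + 2 * (s * (S₁ + 1 / x)) := by
      rw [beurlingMajorant]
      ring
    rw [Real.sign_of_neg hneg, hmaj, hparseval]
    have : 0 < s * (S₁ + 1 / x) := mul_pos hs (by rw [div_neg] at hS₁; linarith)
    linarith
  · have hmaj : beurlingMajorant x = s * (S₁ + S₂) + 2 * (s * (1 / x - S₂)) := by
      rw [beurlingMajorant]
      ring
    rw [Real.sign_of_pos hpos, hmaj, hparseval]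
    have : 0 < s * (1 / x - S₂) := mul_pos hs (sub_pos.2 (tsum_one_div_add_add_one_sq_lt hpos))
    linarith

theorem beurlingMinorant_lt_sign {x : ℝ} (hx : ∀ n : ℤ, x ≠ n) :
    beurlingMinorant x < Real.sign x := by
  have hnx : ∀ n : ℤ, -x ≠ n := fun n h ↦ hx (-n) (by push_cast; linarith)
  rw [beurlingMinorant_eq_neg_beurlingMajorant_neg, ← neg_neg (Real.sign x), ← Real.sign_neg]
  exact neg_lt_neg (sign_lt_beurlingMajorant hnx)

theorem stmt5 (B b : ℝ → ℝ) (hBc : Continuous B) (hbc : Continuous b)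
    (hB : ∀ x : ℝ, (∀ n : ℤ, x ≠ (n:ℝ)) →
      B x = (Real.sin (π * x) / π)^2 *
        ((∑' k : ℕ, 1/(x - (k:ℝ))^2) - (∑' n : ℕ, 1/(x + (n:ℝ) + 1)^2) + 2/x))
    (hb : ∀ x : ℝ, (∀ n : ℤ, x ≠ (n:ℝ)) →
      b x = (Real.sin (π * x) / π)^2 *
        ((∑' k : ℕ, 1/(x - (k:ℝ) - 1)^2) - (∑' n : ℕ, 1/(x + (n:ℝ))^2) + 2/x)) :
    (∀ x : ℝ, b x = -B (-x)) ∧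
    (∀ x : ℝ, b x ≤ Real.sign x ∧ ((∀ n : ℤ, x ≠ (n:ℝ)) → b x < Real.sign x)) := by
  have hstrict (x : ℝ) (hx : ∀ n : ℤ, x ≠ n) : b x < Real.sign x :=
    (hb x hx).trans_lt (beurlingMinorant_lt_sign hx)
  have hsymm : b = fun x ↦ -B (-x) := by
    refine Continuous.ext_on dense_irrational hbc (hBc.comp continuous_neg).neg fun x hx ↦ ?_
    rw [hb x hx.ne_int, hB (-x) hx.neg.ne_int]
    exact beurlingMinorant_eq_neg_beurlingMajorant_neg x
  refine ⟨congrFun hsymm, fun x ↦ ⟨?_, hstrict x⟩⟩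
  exact hbc.le_of_monotone_of_dense Real.sign_monotone dense_irrational
    (fun y hy ↦ (hstrict y hy.ne_int).le) x
end

section
/- Let W(x) = (sin(πx)/π)² · ( ∑_{k=1}^∞ 1/(x−k)² − ∑_{n=1}^∞ 1/(x+n)² + 2/x ) (extended by continuity) and K(x) = (sin(πx)/(πx))². Then W is odd: W(x) + W(−x) = 0 for all real x; moreover 1 − K(x) ≤ W(x) ≤ 1 for x > 0, and −1 ≤ W(x) ≤ −1 + K(x) for x < 0. -/
/-!
Off the integers, differentiating Mathlib's partial fraction expansion of `π cot (π x)` term by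
term gives `π² / sin² (π x) = ∑_{n ∈ ℤ} (x + n)⁻²`. Writing `S x = ∑_{n ≥ 1} (x + n)⁻²`, this turns
`W x` into `1 - (sin (π x) / π)² (x⁻² + 2 S x - 2 / x)`, and for `x > 0` the telescoping bounds
`1 / x - 1 / (2 x²) ≤ S x ≤ 1 / x` give `1 - K x ≤ W x ≤ 1`. Oddness is visible in the defining
formula. Both facts pass from the irrationals to all reals by continuity, and the case `x < 0`
follows from oddness of `W` and evenness of `K`.
-/

open Real Filter Topology

noncomputable def shiftedInvSqSum (x : ℝ) : ℝ := ∑' n : ℕ, 1 / (x + n + 1) ^ 2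

lemma summable_shiftedInvSq (x : ℝ) : Summable fun n : ℕ => 1 / (x + n + 1) ^ 2 := by
  refine ((Real.summable_one_div_nat_add_rpow (x + 1) 2).mpr one_lt_two).congr fun n => ?_
  rw [Real.rpow_two, sq_abs]
  ring_nf

lemma tsum_le_of_le_sub_succ {f a : ℕ → ℝ} (hf : ∀ n, 0 ≤ f n) (ha : ∀ n, 0 ≤ a n)
    (h : ∀ n, f n ≤ a n - a (n + 1)) : ∑' n, f n ≤ a 0 :=
  tsum_le_of_sum_range_le hf fun N => calc
    ∑ n ∈ Finset.range N, f n ≤ ∑ n ∈ Finset.range N, (a n - a (n + 1)) :=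
      Finset.sum_le_sum fun n _ => h n
    _ = a 0 - a N := Finset.sum_range_sub' a N
    _ ≤ a 0 := sub_le_self _ (ha N)

lemma le_tsum_of_sub_succ_le {f a : ℕ → ℝ} (hf : Summable f) (hf0 : ∀ n, 0 ≤ f n)
    (ha : Tendsto a atTop (𝓝 0)) (h : ∀ n, a n - a (n + 1) ≤ f n) : a 0 ≤ ∑' n, f n := by
  have hpartial (N : ℕ) : a 0 - a N ≤ ∑' n, f n := calc
    a 0 - a N = ∑ n ∈ Finset.range N, (a n - a (n + 1)) := (Finset.sum_range_sub' a N).symm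
    _ ≤ ∑ n ∈ Finset.range N, f n := Finset.sum_le_sum fun n _ => h n
    _ ≤ ∑' n, f n := hf.sum_le_tsum _ fun n _ => hf0 n
  simpa using le_of_tendsto (tendsto_const_nhds.sub ha) (Eventually.of_forall hpartial)

lemma tendsto_inv_add_natCast (x : ℝ) : Tendsto (fun n : ℕ => (x + n)⁻¹) atTop (𝓝 0) :=
  (tendsto_atTop_add_const_left _ x tendsto_natCast_atTop_atTop).inv_tendsto_atTop

lemma one_div_add_one_sq_le_inv_sub_inv {a : ℝ} (ha : 0 < a) :
    1 / (a + 1) ^ 2 ≤ a⁻¹ - (a + 1)⁻¹ := by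
  have : a⁻¹ - (a + 1)⁻¹ - 1 / (a + 1) ^ 2 = 1 / (a * (a + 1) ^ 2) := by
    field_simp; ring
  linarith [show 0 ≤ 1 / (a * (a + 1) ^ 2) by positivity]

lemma inv_sub_inv_sq_half_sub_le {a : ℝ} (ha : 0 < a) :
    a⁻¹ - a⁻¹ ^ 2 / 2 - ((a + 1)⁻¹ - (a + 1)⁻¹ ^ 2 / 2) ≤ 1 / (a + 1) ^ 2 := by
  have : 1 / (a + 1) ^ 2 - (a⁻¹ - a⁻¹ ^ 2 / 2 - ((a + 1)⁻¹ - (a + 1)⁻¹ ^ 2 / 2)) =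
      1 / (2 * a ^ 2 * (a + 1) ^ 2) := by
    field_simp; ring
  linarith [show 0 ≤ 1 / (2 * a ^ 2 * (a + 1) ^ 2) by positivity]

lemma shiftedInvSqSum_le {x : ℝ} (hx : 0 < x) : shiftedInvSqSum x ≤ 1 / x := by
  have key := tsum_le_of_le_sub_succ (f := fun n : ℕ => 1 / (x + n + 1) ^ 2)
    (a := fun n : ℕ => (x + n)⁻¹) (fun _ => by positivity) (fun _ => by positivity) fun n => by
      simpa only [Nat.cast_succ, add_assoc] using
        one_div_add_one_sq_le_inv_sub_inv (a := x + n) (by positivity)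
  simpa [shiftedInvSqSum] using key

lemma le_shiftedInvSqSum {x : ℝ} (hx : 0 < x) :
    1 / x - 1 / (2 * x ^ 2) ≤ shiftedInvSqSum x := by
  have hlim : Tendsto (fun n : ℕ => (x + n)⁻¹ - (x + n)⁻¹ ^ 2 / 2) atTop (𝓝 0) := by
    simpa using (tendsto_inv_add_natCast x).sub (((tendsto_inv_add_natCast x).pow 2).div_const 2)
  have key := le_tsum_of_sub_succ_le (summable_shiftedInvSq x) (fun _ => by positivity) hlim
    fun n => by
      simpa only [Nat.cast_succ, add_assoc] using
        inv_sub_inv_sq_half_sub_le (a := x + n) (by positivity)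
  rw [shiftedInvSqSum]
  convert key using 1
  field_simp
  ring

lemma hasSum_pi_mul_cot {x : ℝ} (hx : ∀ n : ℤ, x ≠ n) :
    HasSum (fun n : ℕ => (x - (n + 1))⁻¹ + (x + (n + 1))⁻¹)
      (π * cos (π * x) / sin (π * x) - x⁻¹) := by
  have hz : (x : ℂ) ∈ Complex.integerComplement := by
    rintro ⟨n, hn⟩
    exact hx n (by exact_mod_cast hn.symm)
  have key := (summable_cotTerm hz).hasSum
  rw [show ∑' n, cotTerm (x : ℂ) n = _ from (cot_series_rep' hz).symm] at key
  rw [← Complex.hasSum_ofReal]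
  convert key using 1
  · ext n; simp [cotTerm]
  · simp only [Complex.ofReal_sub, Complex.ofReal_div, Complex.ofReal_mul, Complex.ofReal_cos,
      Complex.ofReal_sin, Complex.ofReal_inv, Complex.cot_eq_cos_div_sin, one_div, sub_left_inj]
    ring

lemma sin_pi_mul_ne_zero_of_ne_intCast {x : ℝ} (hx : ∀ n : ℤ, x ≠ n) : sin (π * x) ≠ 0 := by
  rw [Ne, sin_eq_zero_iff]
  rintro ⟨n, hn⟩
  exact hx n (mul_left_cancel₀ pi_ne_zero (by linarith))

lemma hasDerivAt_pi_mul_cot {x : ℝ} (hx : sin (π * x) ≠ 0) :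
    HasDerivAt (fun y => π * cos (π * y) / sin (π * y)) (-(π ^ 2 / sin (π * x) ^ 2)) x := by
  have hlin : HasDerivAt (fun y : ℝ => π * y) π x := by simpa using (hasDerivAt_id x).const_mul π
  have key := (((hasDerivAt_cos _).comp x hlin).const_mul π).div ((hasDerivAt_sin _).comp x hlin) hx
  refine key.congr_deriv ?_
  simp only [Function.comp_apply]
  field_simp
  linear_combination -sin_sq_add_cos_sq (π * x)

lemma exists_ball_abs_sub_intCast_le {x : ℝ} (hx : ∀ n : ℤ, x ≠ n) :
    ∃ r > 0, ∀ y ∈ Metric.ball x r, ∀ n : ℤ, |x - n| ≤ 2 * |y - n| := by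
  obtain ⟨ε, hε, hball⟩ := Metric.isOpen_iff.mp isOpen_compl_range_intCast x
    fun ⟨n, hn⟩ => hx n hn.symm
  have hfar (n : ℤ) : ε ≤ |x - n| := by
    by_contra! h
    exact hball (by rwa [Metric.mem_ball, dist_comm, Real.dist_eq]) ⟨n, rfl⟩
  refine ⟨ε / 2, half_pos hε, fun y hy n => ?_⟩
  rw [Metric.mem_ball, Real.dist_eq, abs_sub_comm] at hy
  linarith [hfar n, abs_sub_le x y n]

lemma sub_ne_zero_and_add_ne_zero_of_ne_intCast {x : ℝ} (hx : ∀ n : ℤ, x ≠ n) (n : ℕ) :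
    x - (n + 1) ≠ 0 ∧ x + (n + 1) ≠ 0 := by
  refine ⟨sub_ne_zero.mpr (by exact_mod_cast hx (n + 1)), ?_⟩
  rw [← sub_neg_eq_add]
  exact sub_ne_zero.mpr (by exact_mod_cast hx (-(n + 1)))

lemma hasDerivAt_inv_sub_add_inv_add {y c : ℝ} (h₁ : y - c ≠ 0) (h₂ : y + c ≠ 0) :
    HasDerivAt (fun z => (z - c)⁻¹ + (z + c)⁻¹) (-((y - c) ^ 2)⁻¹ - ((y + c) ^ 2)⁻¹) y := by
  refine ((((hasDerivAt_id y).sub_const c).inv h₁).add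
    (((hasDerivAt_id y).add_const c).inv h₂)).congr_deriv ?_
  simp only [id, neg_div, one_div]
  ring

lemma inv_sq_le_four_mul_inv_sq {a b : ℝ} (hb : b ≠ 0) (h : |b| ≤ 2 * |a|) :
    (a ^ 2)⁻¹ ≤ 4 * (b ^ 2)⁻¹ := by
  have hb' : 0 < |b| := abs_pos.mpr hb
  rw [← sq_abs a, ← sq_abs b]
  calc (|a| ^ 2)⁻¹ ≤ ((|b| / 2) ^ 2)⁻¹ := by gcongr; linarith
    _ = 4 * (|b| ^ 2)⁻¹ := by field_simp; norm_num

lemma norm_neg_inv_sq_sub_inv_sq_le {x y c : ℝ} (h₁ : x - c ≠ 0) (h₂ : x + c ≠ 0)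
    (hy₁ : |x - c| ≤ 2 * |y - c|) (hy₂ : |x + c| ≤ 2 * |y + c|) :
    ‖-((y - c) ^ 2)⁻¹ - ((y + c) ^ 2)⁻¹‖ ≤ 4 * ((x - c) ^ 2)⁻¹ + 4 * ((x + c) ^ 2)⁻¹ := by
  rw [Real.norm_eq_abs, ← neg_add', abs_neg, abs_of_nonneg (by positivity)]
  linarith [inv_sq_le_four_mul_inv_sq h₁ hy₁, inv_sq_le_four_mul_inv_sq h₂ hy₂]

lemma hasDerivAt_tsum_inv_sub_add_inv_add {x : ℝ} (hx : ∀ n : ℤ, x ≠ n) :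
    HasDerivAt (fun y : ℝ => ∑' n : ℕ, ((y - (n + 1))⁻¹ + (y + (n + 1))⁻¹))
      (-shiftedInvSqSum (-x) - shiftedInvSqSum x) x := by
  obtain ⟨r, hr, hfar⟩ := exists_ball_abs_sub_intCast_le hx
  have hy_ne (y : ℝ) (hy : y ∈ Metric.ball x r) (n : ℤ) : y ≠ n := by
    rintro rfl
    exact hx n (by simpa [sub_eq_zero] using hfar _ hy n)
  have hu : Summable fun n : ℕ => 4 * ((x - (n + 1)) ^ 2)⁻¹ + 4 * ((x + (n + 1)) ^ 2)⁻¹ := by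
    refine (((summable_shiftedInvSq (-x)).mul_left 4).add
      ((summable_shiftedInvSq x).mul_left 4)).congr fun n => ?_
    simp only [one_div]
    ring_nf
  have hderiv := hasDerivAt_tsum_of_isPreconnected hu Metric.isOpen_ball
    (convex_ball x r).isPreconnected
    (fun n y hy => hasDerivAt_inv_sub_add_inv_add
      (sub_ne_zero_and_add_ne_zero_of_ne_intCast (hy_ne y hy) n).1
      (sub_ne_zero_and_add_ne_zero_of_ne_intCast (hy_ne y hy) n).2)
    (fun n y hy => norm_neg_inv_sq_sub_inv_sq_le
      (sub_ne_zero_and_add_ne_zero_of_ne_intCast hx n).1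
      (sub_ne_zero_and_add_ne_zero_of_ne_intCast hx n).2
      (by exact_mod_cast hfar y hy (n + 1))
      (by simpa only [Int.cast_neg, Int.cast_add, Int.cast_natCast, Int.cast_one, sub_neg_eq_add]
        using hfar y hy (-(n + 1))))
    (Metric.mem_ball_self hr) (hasSum_pi_mul_cot hx).summable (Metric.mem_ball_self hr)
  refine hderiv.congr_deriv ?_
  rw [shiftedInvSqSum, shiftedInvSqSum, ← ((summable_shiftedInvSq (-x)).hasSum.neg.sub
    (summable_shiftedInvSq x).hasSum).tsum_eq]
  congr 1 with n
  simp only [one_div]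
  ring

theorem pi_sq_div_sin_sq {x : ℝ} (hx : ∀ n : ℤ, x ≠ n) :
    π ^ 2 / sin (π * x) ^ 2 = 1 / x ^ 2 + shiftedInvSqSum x + shiftedInvSqSum (-x) := by
  obtain ⟨r, hr, hfar⟩ := exists_ball_abs_sub_intCast_le hx
  have hcot : (fun y : ℝ => ∑' n : ℕ, ((y - (n + 1))⁻¹ + (y + (n + 1))⁻¹)) =ᶠ[𝓝 x]
      fun y => π * cos (π * y) / sin (π * y) - y⁻¹ := by
    filter_upwards [Metric.isOpen_ball.mem_nhds (Metric.mem_ball_self hr)] with y hy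
    refine (hasSum_pi_mul_cot fun n hn => hx n ?_).tsum_eq
    simpa [hn, sub_eq_zero] using hfar y hy n
  have hderiv := ((hasDerivAt_tsum_inv_sub_add_inv_add hx).congr_of_eventuallyEq hcot.symm).unique
    ((hasDerivAt_pi_mul_cot (sin_pi_mul_ne_zero_of_ne_intCast hx)).sub
      (hasDerivAt_inv (by exact_mod_cast hx 0)))
  rw [one_div]
  linarith

/-- `W` off the integers, with the first series of the statement written as
`shiftedInvSqSum (-x)`. -/
noncomputable def beurlingSubFejer (x : ℝ) : ℝ :=
  (sin (π * x) / π) ^ 2 * (shiftedInvSqSum (-x) - shiftedInvSqSum x + 2 / x)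

lemma tsum_one_div_sub_sq (x : ℝ) :
    ∑' k : ℕ, 1 / (x - k - 1) ^ 2 = shiftedInvSqSum (-x) :=
  tsum_congr fun k => by ring_nf

lemma beurlingSubFejer_neg (x : ℝ) : beurlingSubFejer (-x) = -beurlingSubFejer x := by
  simp only [beurlingSubFejer, neg_neg, mul_neg, sin_neg, neg_div, even_two.neg_pow, div_neg]
  ring

lemma beurlingSubFejer_eq {x : ℝ} (hx : ∀ n : ℤ, x ≠ n) :
    beurlingSubFejer x =
      1 - (sin (π * x) / π) ^ 2 * (1 / x ^ 2 + 2 * shiftedInvSqSum x - 2 / x) := by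
  have hsin := sin_pi_mul_ne_zero_of_ne_intCast hx
  have hS : shiftedInvSqSum (-x) = π ^ 2 / sin (π * x) ^ 2 - 1 / x ^ 2 - shiftedInvSqSum x := by
    rw [pi_sq_div_sin_sq hx]; ring
  rw [beurlingSubFejer, hS]
  field_simp
  ring

lemma beurlingSubFejer_mem_Icc {x : ℝ} (hx₀ : 0 < x) (hx : ∀ n : ℤ, x ≠ n) :
    beurlingSubFejer x ∈ Set.Icc (1 - (sin (π * x) / (π * x)) ^ 2) 1 := by
  have hlo := le_shiftedInvSqSum hx₀
  have hhi := shiftedInvSqSum_le hx₀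
  have hfac : (sin (π * x) / (π * x)) ^ 2 = (sin (π * x) / π) ^ 2 * (1 / x ^ 2) := by
    field_simp
  have hsq := sq_nonneg (sin (π * x) / π)
  rw [beurlingSubFejer_eq hx, hfac]
  have h₀ : 0 ≤ 1 / x ^ 2 + 2 * shiftedInvSqSum x - 2 / x := by
    rw [show 1 / x ^ 2 = 2 * (1 / (2 * x ^ 2)) by field_simp, div_eq_mul_one_div 2 x]
    linarith
  have h₁ : 1 / x ^ 2 + 2 * shiftedInvSqSum x - 2 / x ≤ 1 / x ^ 2 := by
    rw [div_eq_mul_one_div 2 x]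
    linarith
  exact ⟨by linarith [mul_le_mul_of_nonneg_left h₁ hsq], by linarith [mul_nonneg hsq h₀]⟩

lemma continuousAt_of_eq_sin_pi_mul_div_sq {K : ℝ → ℝ}
    (hK : ∀ x : ℝ, x ≠ 0 → K x = (sin (π * x) / (π * x)) ^ 2) {x : ℝ} (hx : x ≠ 0) :
    ContinuousAt K x := by
  have hlin : Continuous fun y : ℝ => π * y := continuous_const.mul continuous_id
  exact (((continuous_sin.comp hlin).continuousAt.div hlin.continuousAt
    (mul_ne_zero pi_ne_zero hx)).pow 2).congr
    ((eventually_ne_nhds hx).mono fun y hy => (hK y hy).symm)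

lemma le_of_forall_irrational_le {U : Set ℝ} (hU : IsOpen U) {f g : ℝ → ℝ}
    (hf : ContinuousOn f U) (hg : ContinuousOn g U) (h : ∀ x ∈ U, Irrational x → f x ≤ g x)
    {x : ℝ} (hx : x ∈ U) : f x ≤ g x :=
  ContinuousWithinAt.closure_le (dense_irrational.open_subset_closure_inter hU hx)
    ((hf x hx).mono Set.inter_subset_left) ((hg x hx).mono Set.inter_subset_left)
    fun y hy => h y hy.1 hy.2

theorem stmt6_general (W K : ℝ → ℝ) (hWc : Continuous W)
    (hW : ∀ x : ℝ, (∀ n : ℤ, x ≠ (n:ℝ)) →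
      W x = (Real.sin (π * x) / π)^2 *
        ((∑' k : ℕ, 1/(x - (k:ℝ) - 1)^2) - (∑' n : ℕ, 1/(x + (n:ℝ) + 1)^2) + 2/x))
    (hK : ∀ x : ℝ, x ≠ 0 → K x = (Real.sin (π * x) / (π * x))^2) :
    (∀ x : ℝ, W x + W (-x) = 0) ∧
    (∀ x : ℝ, 0 < x → 1 - K x ≤ W x ∧ W x ≤ 1) ∧
    (∀ x : ℝ, x < 0 → -1 ≤ W x ∧ W x ≤ -1 + K x) := by
  have hWirr (x : ℝ) (hx : Irrational x) : W x = beurlingSubFejer x := by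
    rw [hW x hx.ne_int, tsum_one_div_sub_sq]; rfl
  have hodd (x : ℝ) : W x + W (-x) = 0 := by
    refine congrFun (Continuous.ext_on dense_irrational (hWc.add (hWc.comp continuous_neg))
      continuous_const fun y hy => ?_) x
    simp [hWirr y hy, hWirr (-y) hy.neg, beurlingSubFejer_neg]
  have hKc : ContinuousOn K (Set.Ioi 0) := fun x hx =>
    (continuousAt_of_eq_sin_pi_mul_div_sq hK (ne_of_gt hx)).continuousWithinAt
  have hpos (x : ℝ) (hx : 0 < x) : 1 - K x ≤ W x ∧ W x ≤ 1 := by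
    have hirr (y : ℝ) (hy : 0 < y) (hyirr : Irrational y) :
        1 - K y ≤ W y ∧ W y ≤ 1 := by
      rw [hK y hy.ne', hWirr y hyirr]
      exact beurlingSubFejer_mem_Icc hy hyirr.ne_int
    exact ⟨le_of_forall_irrational_le isOpen_Ioi (continuousOn_const.sub hKc) hWc.continuousOn
        (fun y hy hyirr => (hirr y hy hyirr).1) hx,
      le_of_forall_irrational_le isOpen_Ioi hWc.continuousOn continuousOn_const
        (fun y hy hyirr => (hirr y hy hyirr).2) hx⟩
  refine ⟨hodd, hpos, fun x hx => ?_⟩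
  have hKneg : K (-x) = K x := by
    rw [hK x hx.ne, hK (-x) (neg_ne_zero.mpr hx.ne), mul_neg, sin_neg, neg_div_neg_eq]
  have := hpos (-x) (neg_pos.mpr hx)
  constructor <;> linarith [hodd x]

theorem stmt6 (W K : ℝ → ℝ) (hWc : Continuous W)
    (hW : ∀ x : ℝ, (∀ n : ℤ, x ≠ (n:ℝ)) →
      W x = (Real.sin (π * x) / π)^2 *
        ((∑' k : ℕ, 1/(x - (k:ℝ) - 1)^2) - (∑' n : ℕ, 1/(x + (n:ℝ) + 1)^2) + 2/x))
    (hK0 : K 0 = 1)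
    (hK : ∀ x : ℝ, x ≠ 0 → K x = (Real.sin (π * x) / (π * x))^2) :
    (∀ x : ℝ, W x + W (-x) = 0) ∧
    (∀ x : ℝ, 0 < x → 1 - K x ≤ W x ∧ W x ≤ 1) ∧
    (∀ x : ℝ, x < 0 → -1 ≤ W x ∧ W x ≤ -1 + K x) :=
  stmt6_general W K hWc hW hK
end
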